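/- arXiv:2105.13922 — 2 statements merged into one kernel-verified Lean document; each statement's English description precedes it below -/
import Mathlib

section
/- Let E : ℝ^m × ℝ^n → ℝ be twice continuously differentiable and consider the zero-sum game with ξ = (∇_φ L₁, ∇_θ L₂), where L₁ = E and L₂ = −E, so ξ = (∇_φ E, −∇_θ E), and let A = (J_ξ − J_ξᵀ)/2 be the antisymmetric part of the Jacobian of ξ. Then the symplectic-gradient-adjusted field ξ̂ = ξ + Aᵀξ satisfies ξ̂ = (∇_φ(E + (1/2)‖∇_θ E‖²), ∇_θ(−E + (1/2)‖∇_φ E‖²)); that is, in a zero-sum game SGA performs gradient descent on the modified losses L̃₁ = E + (1/2)‖∇_θ E‖² and L̃₂ = −E + (1/2)‖∇_φ E‖². -/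
noncomputable section

/-- Gradient with respect to the first player's parameters `φ`. -/
def gradPhi {m n : ℕ}
    (E : EuclideanSpace ℝ (Fin m) × EuclideanSpace ℝ (Fin n) → ℝ)
    (z : EuclideanSpace ℝ (Fin m) × EuclideanSpace ℝ (Fin n)) : EuclideanSpace ℝ (Fin m) :=
  gradient (fun φ => E (φ, z.2)) z.1

/-- Gradient with respect to the second player's parameters `θ`. -/
def gradTheta {m n : ℕ}
    (E : EuclideanSpace ℝ (Fin m) × EuclideanSpace ℝ (Fin n) → ℝ)
    (z : EuclideanSpace ℝ (Fin m) × EuclideanSpace ℝ (Fin n)) : EuclideanSpace ℝ (Fin n) :=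
  gradient (fun θ => E (z.1, θ)) z.2

/-- Partial (Fréchet) derivative with respect to the first player's parameters `φ`. -/
def dPhi {m n : ℕ} {W : Type*} [NormedAddCommGroup W] [NormedSpace ℝ W]
    (f : EuclideanSpace ℝ (Fin m) × EuclideanSpace ℝ (Fin n) → W)
    (z : EuclideanSpace ℝ (Fin m) × EuclideanSpace ℝ (Fin n)) :
    EuclideanSpace ℝ (Fin m) →L[ℝ] W :=
  (fderiv ℝ f z).comp (ContinuousLinearMap.inl ℝ (EuclideanSpace ℝ (Fin m)) (EuclideanSpace ℝ (Fin n)))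

/-- Partial (Fréchet) derivative with respect to the second player's parameters `θ`. -/
def dTheta {m n : ℕ} {W : Type*} [NormedAddCommGroup W] [NormedSpace ℝ W]
    (f : EuclideanSpace ℝ (Fin m) × EuclideanSpace ℝ (Fin n) → W)
    (z : EuclideanSpace ℝ (Fin m) × EuclideanSpace ℝ (Fin n)) :
    EuclideanSpace ℝ (Fin n) →L[ℝ] W :=
  (fderiv ℝ f z).comp (ContinuousLinearMap.inr ℝ (EuclideanSpace ℝ (Fin m)) (EuclideanSpace ℝ (Fin n)))

section Aux

open ContinuousLinearMap InnerProductSpace RealInnerProductSpace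

/-- The inverse of the Riesz isomorphism as a genuinely `ℝ`-linear continuous map. -/
def dualSymmCLM (F : Type*) [NormedAddCommGroup F] [InnerProductSpace ℝ F]
    [FiniteDimensional ℝ F] : StrongDual ℝ F →L[ℝ] F :=
  LinearMap.toContinuousLinearMap
    { toFun := fun L => (toDual ℝ F).symm L
      map_add' := fun x y => by simp
      map_smul' := fun c x => by simp }

@[simp] theorem inner_dualSymmCLM {F : Type*} [NormedAddCommGroup F] [InnerProductSpace ℝ F]
    [FiniteDimensional ℝ F] (L : StrongDual ℝ F) (v : F) :
    ⟪dualSymmCLM F L, v⟫ = L v := InnerProductSpace.toDual_symm_apply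

/-- Abbreviations for the parameter spaces. -/
private abbrev Vm (m : ℕ) := EuclideanSpace ℝ (Fin m)
private abbrev Sp (m n : ℕ) := EuclideanSpace ℝ (Fin m) × EuclideanSpace ℝ (Fin n)

theorem hasFDerivAt_partial_phi {m n : ℕ} {W : Type*} [NormedAddCommGroup W] [NormedSpace ℝ W]
    (f : Sp m n → W) (z : Sp m n) (hf : DifferentiableAt ℝ f z) :
    HasFDerivAt (fun φ => f (φ, z.2)) (dPhi f z) z.1 :=
  hf.hasFDerivAt.comp z.1 (hasFDerivAt_prodMk_left z.1 z.2)

theorem hasFDerivAt_partial_theta {m n : ℕ} {W : Type*} [NormedAddCommGroup W] [NormedSpace ℝ W]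
    (f : Sp m n → W) (z : Sp m n) (hf : DifferentiableAt ℝ f z) :
    HasFDerivAt (fun θ => f (z.1, θ)) (dTheta f z) z.2 :=
  hf.hasFDerivAt.comp z.2 (hasFDerivAt_prodMk_right z.1 z.2)

theorem gradPhi_eq {m n : ℕ} (E : Sp m n → ℝ) (hE : Differentiable ℝ E) (w : Sp m n) :
    gradPhi E w = dualSymmCLM (Vm m) ((compL ℝ (Vm m) (Sp m n) ℝ).flip (inl ℝ (Vm m) (Vm n)) (fderiv ℝ E w)) := by
  show (toDual ℝ (Vm m)).symm (fderiv ℝ (fun φ => E (φ, w.2)) w.1) = _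
  rw [(hasFDerivAt_partial_phi E w (hE w)).fderiv]
  rfl

theorem gradTheta_eq {m n : ℕ} (E : Sp m n → ℝ) (hE : Differentiable ℝ E) (w : Sp m n) :
    gradTheta E w = dualSymmCLM (Vm n) ((compL ℝ (Vm n) (Sp m n) ℝ).flip (inr ℝ (Vm m) (Vm n)) (fderiv ℝ E w)) := by
  show (toDual ℝ (Vm n)).symm (fderiv ℝ (fun θ => E (w.1, θ)) w.2) = _
  rw [(hasFDerivAt_partial_theta E w (hE w)).fderiv]
  rfl

theorem inner_gradPhi {m n : ℕ} (E : Sp m n → ℝ) (hE : Differentiable ℝ E) (z : Sp m n) (v : Vm m) :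
    ⟪gradPhi E z, v⟫ = fderiv ℝ E z (v, 0) := by
  rw [gradPhi_eq E hE z, inner_dualSymmCLM]; rfl

theorem inner_gradTheta {m n : ℕ} (E : Sp m n → ℝ) (hE : Differentiable ℝ E) (z : Sp m n) (v : Vm n) :
    ⟪gradTheta E z, v⟫ = fderiv ℝ E z (0, v) := by
  rw [gradTheta_eq E hE z, inner_dualSymmCLM]; rfl

theorem hasFDerivAt_gradPhi {m n : ℕ} (E : Sp m n → ℝ) (hE : ContDiff ℝ 2 E) (z : Sp m n) :
    HasFDerivAt (fun w => gradPhi E w)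
      (((dualSymmCLM (Vm m)).comp ((compL ℝ (Vm m) (Sp m n) ℝ).flip (inl ℝ (Vm m) (Vm n)))).comp
        (fderiv ℝ (fderiv ℝ E) z)) z := by
  have hd : Differentiable ℝ E := hE.differentiable (by norm_num)
  have hfd : ContDiff ℝ 1 (fderiv ℝ E) := hE.fderiv_right (by norm_num)
  have hH : HasFDerivAt (fderiv ℝ E) (fderiv ℝ (fderiv ℝ E) z) z :=
    (hfd.differentiable one_ne_zero z).hasFDerivAt
  have h := (((dualSymmCLM (Vm m)).comp
    ((compL ℝ (Vm m) (Sp m n) ℝ).flip (inl ℝ (Vm m) (Vm n)))).hasFDerivAt).comp z hH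
  refine h.congr_of_eventuallyEq (Filter.Eventually.of_forall fun w => ?_)
  show gradPhi E w = _
  rw [gradPhi_eq E hd w]; rfl

theorem hasFDerivAt_gradTheta {m n : ℕ} (E : Sp m n → ℝ) (hE : ContDiff ℝ 2 E) (z : Sp m n) :
    HasFDerivAt (fun w => gradTheta E w)
      (((dualSymmCLM (Vm n)).comp ((compL ℝ (Vm n) (Sp m n) ℝ).flip (inr ℝ (Vm m) (Vm n)))).comp
        (fderiv ℝ (fderiv ℝ E) z)) z := by
  have hd : Differentiable ℝ E := hE.differentiable (by norm_num)
  have hfd : ContDiff ℝ 1 (fderiv ℝ E) := hE.fderiv_right (by norm_num)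
  have hH : HasFDerivAt (fderiv ℝ E) (fderiv ℝ (fderiv ℝ E) z) z :=
    (hfd.differentiable one_ne_zero z).hasFDerivAt
  have h := (((dualSymmCLM (Vm n)).comp
    ((compL ℝ (Vm n) (Sp m n) ℝ).flip (inr ℝ (Vm m) (Vm n)))).hasFDerivAt).comp z hH
  refine h.congr_of_eventuallyEq (Filter.Eventually.of_forall fun w => ?_)
  show gradTheta E w = _
  rw [gradTheta_eq E hd w]; rfl

theorem inner_fderiv_gradPhi {m n : ℕ} (E : Sp m n → ℝ) (hE : ContDiff ℝ 2 E) (z : Sp m n)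
    (u : Sp m n) (v : Vm m) :
    ⟪fderiv ℝ (fun w => gradPhi E w) z u, v⟫ = fderiv ℝ (fderiv ℝ E) z u (v, 0) := by
  rw [(hasFDerivAt_gradPhi E hE z).fderiv]
  show ⟪dualSymmCLM (Vm m) _, v⟫ = _
  rw [inner_dualSymmCLM]; rfl

theorem inner_fderiv_gradTheta {m n : ℕ} (E : Sp m n → ℝ) (hE : ContDiff ℝ 2 E) (z : Sp m n)
    (u : Sp m n) (v : Vm n) :
    ⟪fderiv ℝ (fun w => gradTheta E w) z u, v⟫ = fderiv ℝ (fderiv ℝ E) z u (0, v) := by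
  rw [(hasFDerivAt_gradTheta E hE z).fderiv]
  show ⟪dualSymmCLM (Vm n) _, v⟫ = _
  rw [inner_dualSymmCLM]; rfl

theorem dPhi_apply {m n : ℕ} {W : Type*} [NormedAddCommGroup W] [NormedSpace ℝ W]
    (f : Sp m n → W) (z : Sp m n) (u : Vm m) : dPhi f z u = fderiv ℝ f z (u, 0) := by
  show fderiv ℝ f z (ContinuousLinearMap.inl ℝ (Vm m) (Vm n) u) = _
  rw [ContinuousLinearMap.inl_apply]

theorem dTheta_apply {m n : ℕ} {W : Type*} [NormedAddCommGroup W] [NormedSpace ℝ W]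
    (f : Sp m n → W) (z : Sp m n) (u : Vm n) : dTheta f z u = fderiv ℝ f z (0, u) := by
  show fderiv ℝ f z (ContinuousLinearMap.inr ℝ (Vm m) (Vm n) u) = _
  rw [ContinuousLinearMap.inr_apply]

theorem inner_dPhi_grad1 {m n : ℕ} (E : Sp m n → ℝ) (hE : ContDiff ℝ 2 E) (z : Sp m n) (u v : Vm m) :
    ⟪dPhi (fun w => gradPhi E w) z u, v⟫ = fderiv ℝ (fderiv ℝ E) z (u, 0) (v, 0) := by
  rw [dPhi_apply, inner_fderiv_gradPhi E hE]

theorem inner_dTheta_grad1 {m n : ℕ} (E : Sp m n → ℝ) (hE : ContDiff ℝ 2 E) (z : Sp m n)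
    (u : Vm n) (v : Vm m) :
    ⟪dTheta (fun w => gradPhi E w) z u, v⟫ = fderiv ℝ (fderiv ℝ E) z (0, u) (v, 0) := by
  rw [dTheta_apply, inner_fderiv_gradPhi E hE]

theorem inner_dPhi_grad2 {m n : ℕ} (E : Sp m n → ℝ) (hE : ContDiff ℝ 2 E) (z : Sp m n)
    (u : Vm m) (v : Vm n) :
    ⟪dPhi (fun w => gradTheta E w) z u, v⟫ = fderiv ℝ (fderiv ℝ E) z (u, 0) (0, v) := by
  rw [dPhi_apply, inner_fderiv_gradTheta E hE]

theorem inner_dTheta_grad2 {m n : ℕ} (E : Sp m n → ℝ) (hE : ContDiff ℝ 2 E) (z : Sp m n) (u v : Vm n) :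
    ⟪dTheta (fun w => gradTheta E w) z u, v⟫ = fderiv ℝ (fderiv ℝ E) z (0, u) (0, v) := by
  rw [dTheta_apply, inner_fderiv_gradTheta E hE]

theorem dPhi_neg {m n : ℕ} {W : Type*} [NormedAddCommGroup W] [NormedSpace ℝ W]
    (f : Sp m n → W) (z : Sp m n) : dPhi (fun w => -f w) z = -dPhi f z := by
  unfold dPhi
  rw [fderiv_fun_neg, ContinuousLinearMap.neg_comp]

theorem dTheta_neg {m n : ℕ} {W : Type*} [NormedAddCommGroup W] [NormedSpace ℝ W]
    (f : Sp m n → W) (z : Sp m n) : dTheta (fun w => -f w) z = -dTheta f z := by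
  unfold dTheta
  rw [fderiv_fun_neg, ContinuousLinearMap.neg_comp]

theorem inner_gradPhi_modified {m n : ℕ} (E : Sp m n → ℝ) (hE : ContDiff ℝ 2 E) (z : Sp m n)
    (v : Vm m) :
    ⟪gradPhi (fun w => E w + (1 / 2) * ‖gradTheta E w‖ ^ 2) z, v⟫ =
      ⟪gradPhi E z, v⟫ + ⟪dPhi (fun w => gradTheta E w) z v, gradTheta E z⟫ := by
  have hd : Differentiable ℝ E := hE.differentiable (by norm_num)
  have hg2 : DifferentiableAt ℝ (fun w => gradTheta E w) z :=
    (hasFDerivAt_gradTheta E hE z).differentiableAt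
  have hgφ : HasFDerivAt (fun φ => gradTheta E (φ, z.2)) (dPhi (fun w => gradTheta E w) z) z.1 :=
    hasFDerivAt_partial_phi _ z hg2
  have hEφ : HasFDerivAt (fun φ => E (φ, z.2)) (dPhi E z) z.1 := hasFDerivAt_partial_phi E z (hd z)
  have hin : HasFDerivAt (fun φ : Vm m => (⟪gradTheta E (φ, z.2), gradTheta E (φ, z.2)⟫ : ℝ))
      ((fderivInnerCLM ℝ (gradTheta E z, gradTheta E z)).comp
        ((dPhi (fun w => gradTheta E w) z).prod (dPhi (fun w => gradTheta E w) z))) z.1 :=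
    HasFDerivAt.inner ℝ hgφ hgφ
  have hF : HasFDerivAt (fun φ => E (φ, z.2) + (1 / 2) * ‖gradTheta E (φ, z.2)‖ ^ 2)
      (dPhi E z + (1/2 : ℝ) • ((fderivInnerCLM ℝ (gradTheta E z, gradTheta E z)).comp
        ((dPhi (fun w => gradTheta E w) z).prod (dPhi (fun w => gradTheta E w) z)))) z.1 := by
    refine hEφ.add ?_
    have h2 := hin.const_mul (1/2 : ℝ)
    refine h2.congr_of_eventuallyEq (Filter.Eventually.of_forall fun φ => ?_)
    simp only [← real_inner_self_eq_norm_sq]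
  have key : ⟪gradPhi (fun w => E w + (1 / 2) * ‖gradTheta E w‖ ^ 2) z, v⟫ =
      (dPhi E z + (1/2 : ℝ) • ((fderivInnerCLM ℝ (gradTheta E z, gradTheta E z)).comp
        ((dPhi (fun w => gradTheta E w) z).prod (dPhi (fun w => gradTheta E w) z)))) v := by
    show ⟪(toDual ℝ (Vm m)).symm
      (fderiv ℝ (fun φ => E (φ, z.2) + (1 / 2) * ‖gradTheta E (φ, z.2)‖ ^ 2) z.1), v⟫ = _
    rw [hF.fderiv]
    exact InnerProductSpace.toDual_symm_apply
  rw [key, inner_gradPhi E hd z v]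
  simp only [ContinuousLinearMap.add_apply, ContinuousLinearMap.smul_apply,
    ContinuousLinearMap.comp_apply, ContinuousLinearMap.prod_apply, fderivInnerCLM_apply,
    smul_eq_mul, dPhi_apply]
  rw [real_inner_comm (gradTheta E z)]
  ring

theorem inner_gradTheta_modified {m n : ℕ} (E : Sp m n → ℝ) (hE : ContDiff ℝ 2 E) (z : Sp m n)
    (v : Vm n) :
    ⟪gradTheta (fun w => -E w + (1 / 2) * ‖gradPhi E w‖ ^ 2) z, v⟫ =
      -⟪gradTheta E z, v⟫ + ⟪dTheta (fun w => gradPhi E w) z v, gradPhi E z⟫ := by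
  have hd : Differentiable ℝ E := hE.differentiable (by norm_num)
  have hg1 : DifferentiableAt ℝ (fun w => gradPhi E w) z :=
    (hasFDerivAt_gradPhi E hE z).differentiableAt
  have hgθ : HasFDerivAt (fun θ => gradPhi E (z.1, θ)) (dTheta (fun w => gradPhi E w) z) z.2 :=
    hasFDerivAt_partial_theta _ z hg1
  have hEθ : HasFDerivAt (fun θ => -E (z.1, θ)) (-dTheta E z) z.2 :=
    (hasFDerivAt_partial_theta E z (hd z)).neg
  have hin : HasFDerivAt (fun θ : Vm n => (⟪gradPhi E (z.1, θ), gradPhi E (z.1, θ)⟫ : ℝ))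
      ((fderivInnerCLM ℝ (gradPhi E z, gradPhi E z)).comp
        ((dTheta (fun w => gradPhi E w) z).prod (dTheta (fun w => gradPhi E w) z))) z.2 :=
    HasFDerivAt.inner ℝ hgθ hgθ
  have hF : HasFDerivAt (fun θ => -E (z.1, θ) + (1 / 2) * ‖gradPhi E (z.1, θ)‖ ^ 2)
      (-dTheta E z + (1/2 : ℝ) • ((fderivInnerCLM ℝ (gradPhi E z, gradPhi E z)).comp
        ((dTheta (fun w => gradPhi E w) z).prod (dTheta (fun w => gradPhi E w) z)))) z.2 := by
    refine hEθ.add ?_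
    have h2 := hin.const_mul (1/2 : ℝ)
    refine h2.congr_of_eventuallyEq (Filter.Eventually.of_forall fun θ => ?_)
    simp only [← real_inner_self_eq_norm_sq]
  have key : ⟪gradTheta (fun w => -E w + (1 / 2) * ‖gradPhi E w‖ ^ 2) z, v⟫ =
      (-dTheta E z + (1/2 : ℝ) • ((fderivInnerCLM ℝ (gradPhi E z, gradPhi E z)).comp
        ((dTheta (fun w => gradPhi E w) z).prod (dTheta (fun w => gradPhi E w) z)))) v := by
    show ⟪(toDual ℝ (Vm n)).symm
      (fderiv ℝ (fun θ => -E (z.1, θ) + (1 / 2) * ‖gradPhi E (z.1, θ)‖ ^ 2) z.2), v⟫ = _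
    rw [hF.fderiv]
    exact InnerProductSpace.toDual_symm_apply
  rw [key]
  simp only [ContinuousLinearMap.add_apply, ContinuousLinearMap.neg_apply,
    ContinuousLinearMap.smul_apply, ContinuousLinearMap.comp_apply,
    ContinuousLinearMap.prod_apply, fderivInnerCLM_apply, smul_eq_mul, dTheta_apply]
  rw [real_inner_comm (gradPhi E z), ← inner_gradTheta E hd z v]
  ring

end Aux

open ContinuousLinearMap InnerProductSpace RealInnerProductSpace in
/-- **Symplectic Gradient Adjustment in zero-sum games.**
For `L₁ = E`, `L₂ = −E`, `ξ = (∇_φ L₁, ∇_θ L₂) = (∇_φ E, −∇_θ E)`, and `A` the antisymmetric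
part of the Jacobian of `ξ`, the adjusted field `ξ̂ = ξ + Aᵀξ` is the pair of gradients of the
modified losses `L̃₁ = E + (1/2)‖∇_θ E‖²` and `L̃₂ = −E + (1/2)‖∇_φ E‖²`. -/
theorem sga_zero_sum_modified_losses {m n : ℕ}
    (E : EuclideanSpace ℝ (Fin m) × EuclideanSpace ℝ (Fin n) → ℝ)
    (hE : ContDiff ℝ 2 E)
    -- the components of `ξ = (∇_φ L₁, ∇_θ L₂)` with `L₁ = E`, `L₂ = −E`
    (ξ1 : EuclideanSpace ℝ (Fin m) × EuclideanSpace ℝ (Fin n) → EuclideanSpace ℝ (Fin m))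
    (ξ2 : EuclideanSpace ℝ (Fin m) × EuclideanSpace ℝ (Fin n) → EuclideanSpace ℝ (Fin n))
    (hξ1 : ξ1 = fun w => gradPhi E w)
    (hξ2 : ξ2 = fun w => -gradTheta E w) :
    ∀ z : EuclideanSpace ℝ (Fin m) × EuclideanSpace ℝ (Fin n),
      -- blocks of `A = (J_ξ − J_ξᵀ)/2`
      ∀ (A11 : EuclideanSpace ℝ (Fin m) →L[ℝ] EuclideanSpace ℝ (Fin m))
        (A12 : EuclideanSpace ℝ (Fin n) →L[ℝ] EuclideanSpace ℝ (Fin m))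
        (A21 : EuclideanSpace ℝ (Fin m) →L[ℝ] EuclideanSpace ℝ (Fin n))
        (A22 : EuclideanSpace ℝ (Fin n) →L[ℝ] EuclideanSpace ℝ (Fin n)),
        A11 = (1 / 2 : ℝ) • (dPhi ξ1 z - ContinuousLinearMap.adjoint (dPhi ξ1 z)) →
        A12 = (1 / 2 : ℝ) • (dTheta ξ1 z - ContinuousLinearMap.adjoint (dPhi ξ2 z)) →
        A21 = (1 / 2 : ℝ) • (dPhi ξ2 z - ContinuousLinearMap.adjoint (dTheta ξ1 z)) →
        A22 = (1 / 2 : ℝ) • (dTheta ξ2 z - ContinuousLinearMap.adjoint (dTheta ξ2 z)) →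
        -- the adjusted field `ξ̂ = ξ + Aᵀ ξ` is a pair of gradients of the modified losses
        (ξ1 z + ContinuousLinearMap.adjoint A11 (ξ1 z) +
            ContinuousLinearMap.adjoint A21 (ξ2 z) =
          gradPhi (fun w => E w + (1 / 2) * ‖gradTheta E w‖ ^ 2) z) ∧
        (ξ2 z + ContinuousLinearMap.adjoint A12 (ξ1 z) +
            ContinuousLinearMap.adjoint A22 (ξ2 z) =
          gradTheta (fun w => -E w + (1 / 2) * ‖gradPhi E w‖ ^ 2) z) := by
  intro z A11 A12 A21 A22 h11 h12 h21 h22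
  subst hξ1 hξ2 h11 h12 h21 h22
  have hd : Differentiable ℝ E := hE.differentiable (by norm_num)
  have hsym := ((hE.contDiffAt : ContDiffAt ℝ 2 E z).isSymmSndFDerivAt (by simp)).eq
  constructor
  · refine ext_inner_right ℝ fun v => ?_
    rw [inner_gradPhi_modified E hE z v]
    simp only [dPhi_neg, dTheta_neg, map_neg, ContinuousLinearMap.smul_apply,
      ContinuousLinearMap.sub_apply, ContinuousLinearMap.neg_apply, inner_add_left,
      inner_smul_right, inner_sub_right, inner_neg_left, inner_neg_right,
      ContinuousLinearMap.adjoint_inner_left, ContinuousLinearMap.adjoint_inner_right]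
    simp only [real_inner_comm (gradPhi E z), real_inner_comm (gradTheta E z)]
    simp only [inner_dPhi_grad1 E hE z, inner_dTheta_grad1 E hE z, inner_dPhi_grad2 E hE z,
      inner_dTheta_grad2 E hE z]
    have c1 : ⟪gradPhi E z, (dPhi (fun w => gradPhi E w) z) v⟫_ℝ =
        fderiv ℝ (fderiv ℝ E) z (v, 0) (gradPhi E z, 0) := by
      rw [real_inner_comm]; exact inner_dPhi_grad1 E hE z v (gradPhi E z)
    have c3 : ⟪gradTheta E z, (dPhi (fun w => gradTheta E w) z) v⟫_ℝ =
        fderiv ℝ (fderiv ℝ E) z (v, 0) (0, gradTheta E z) := by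
      rw [real_inner_comm]; exact inner_dPhi_grad2 E hE z v (gradTheta E z)
    linear_combination (1/2 : ℝ) * hsym (v, (0 : EuclideanSpace ℝ (Fin n)))
        (gradPhi E z, (0 : EuclideanSpace ℝ (Fin n))) +
      (1/2 : ℝ) * hsym ((0 : EuclideanSpace ℝ (Fin m)), gradTheta E z)
        (v, (0 : EuclideanSpace ℝ (Fin n))) +
      (1/2 : ℝ) * c1 - (1/2 : ℝ) * c3
  · refine ext_inner_right ℝ fun v => ?_
    rw [inner_gradTheta_modified E hE z v]
    simp only [dPhi_neg, dTheta_neg, map_neg, ContinuousLinearMap.smul_apply,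
      ContinuousLinearMap.sub_apply, ContinuousLinearMap.neg_apply, inner_add_left,
      inner_smul_right, inner_sub_right, inner_neg_left, inner_neg_right,
      ContinuousLinearMap.adjoint_inner_left, ContinuousLinearMap.adjoint_inner_right]
    simp only [real_inner_comm (gradPhi E z), real_inner_comm (gradTheta E z)]
    simp only [inner_dPhi_grad1 E hE z, inner_dTheta_grad1 E hE z, inner_dPhi_grad2 E hE z,
      inner_dTheta_grad2 E hE z]
    have c2 : ⟪gradPhi E z, (dTheta (fun w => gradPhi E w) z) v⟫_ℝ =
        fderiv ℝ (fderiv ℝ E) z (0, v) (gradPhi E z, 0) := by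
      rw [real_inner_comm]; exact inner_dTheta_grad1 E hE z v (gradPhi E z)
    have c4 : ⟪gradTheta E z, (dTheta (fun w => gradTheta E w) z) v⟫_ℝ =
        fderiv ℝ (fderiv ℝ E) z (0, v) (0, gradTheta E z) := by
      rw [real_inner_comm]; exact inner_dTheta_grad2 E hE z v (gradTheta E z)
    linear_combination (1/2 : ℝ) * hsym (gradPhi E z, (0 : EuclideanSpace ℝ (Fin n)))
        ((0 : EuclideanSpace ℝ (Fin m)), v) +
      (1/2 : ℝ) * hsym ((0 : EuclideanSpace ℝ (Fin m)), v)
        ((0 : EuclideanSpace ℝ (Fin m)), gradTheta E z) -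
      (1/2 : ℝ) * c2 + (1/2 : ℝ) * c4
end
end

section
/- Let L₁, L₂ : ℝ^m × ℝ^n → ℝ be twice continuously differentiable and set f = −∇_φ L₁, g = −∇_θ L₂ (general two-player gradient descent). Then the first-order drift correction of simultaneous gradient descent for the first player satisfies f₁ = −(1/2)(f·∇_φ f + g·∇_θ f) = −(1/4)∇_φ‖∇_φ L₁‖² − (1/2)(∇_θ L₂)·∇_θ(∇_φ L₁), and for the second player g₁ = −(1/2)(f·∇_φ g + g·∇_θ g) = −(1/4)∇_θ‖∇_θ L₂‖² − (1/2)(∇_φ L₁)·∇_φ(∇_θ L₂), where (∇_θ L₂)·∇_θ(∇_φ L₁) denotes the row vector with j-th entry Σ_i (∂L₂/∂θ_i)(∂²L₁/∂θ_i∂φ_j), and analogously for the other mixed term. -/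
noncomputable section

/-! The self term `f·∇_φ f` equals `(1/2) ∇_φ ‖∇_φ L₁‖²`: differentiating `‖∇_φ L₁‖²` in a
direction `u` of `φ` gives `2 ⟪∇_φ L₁, D²L₁ (u, 0)⟫`, and the symmetry of the Hessian moves `u`
to the other slot. The cross term only changes sign, and the second player is symmetric. -/

open scoped RealInnerProductSpace

section PartialGradient

variable {X M : Type*} [NormedAddCommGroup X] [NormedSpace ℝ X]
  [NormedAddCommGroup M] [InnerProductSpace ℝ M] [CompleteSpace M]

def dualAlong (ι : M →L[ℝ] X) : StrongDual ℝ X →L[ℝ] M :=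
  (InnerProductSpace.toDual ℝ M).symm.toContinuousLinearEquiv.toContinuousLinearMap.comp
    (ContinuousLinearMap.precomp ℝ ι)

theorem inner_dualAlong (ι : M →L[ℝ] X) (ℓ : StrongDual ℝ X) (u : M) :
    ⟪dualAlong ι ℓ, u⟫ = ℓ (ι u) :=
  InnerProductSpace.toDual_symm_apply (x := u) (y := ℓ.comp ι)

/-- The Riesz representative of `u ↦ DE(x)(ι u)`. Unlike `gradPhi` and `gradTheta`, which
differentiate a slice of `E`, it is the image of `fderiv ℝ E` under a fixed continuous linear
map, so it can be differentiated in `x`. -/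
def partialGradient (ι : M →L[ℝ] X) (E : X → ℝ) (x : X) : M :=
  dualAlong ι (fderiv ℝ E x)

theorem inner_partialGradient (ι : M →L[ℝ] X) (E : X → ℝ) (x : X) (u : M) :
    ⟪partialGradient ι E x, u⟫ = fderiv ℝ E x (ι u) :=
  inner_dualAlong ι _ u

variable {ι : M →L[ℝ] X} {E : X → ℝ}

theorem ContDiff.partialGradient (hE : ContDiff ℝ 2 E) : ContDiff ℝ 1 (partialGradient ι E) :=
  (dualAlong ι).contDiff.comp (hE.fderiv_right (m := 1) le_rfl)

theorem hasFDerivAt_partialGradient (hE : ContDiff ℝ 2 E) (x : X) :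
    HasFDerivAt (partialGradient ι E) ((dualAlong ι).comp (fderiv ℝ (fderiv ℝ E) x)) x :=
  (dualAlong ι).hasFDerivAt.comp x
    (((hE.fderiv_right (m := 1) le_rfl).differentiable one_ne_zero x).hasFDerivAt)

theorem inner_fderiv_partialGradient (hE : ContDiff ℝ 2 E) (x : X) (v : X) (u : M) :
    ⟪fderiv ℝ (partialGradient ι E) x v, u⟫ = fderiv ℝ (fderiv ℝ E) x v (ι u) := by
  rw [(hasFDerivAt_partialGradient hE x).fderiv]
  exact inner_dualAlong ι _ u

theorem partialGradient_norm_sq (hE : ContDiff ℝ 2 E) (x : X) :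
    partialGradient ι (fun y => ‖partialGradient ι E y‖ ^ 2) x =
      (2 : ℝ) • fderiv ℝ (partialGradient ι E) x (ι (partialGradient ι E x)) := by
  set G := partialGradient ι E
  have hG : HasFDerivAt G (fderiv ℝ G x) x :=
    (hE.partialGradient.differentiable one_ne_zero x).hasFDerivAt
  have hsymm : IsSymmSndFDerivAt ℝ E x := hE.contDiffAt.isSymmSndFDerivAt (by simp)
  refine ext_inner_right ℝ fun u => ?_
  calc ⟪partialGradient ι (fun y => ‖G y‖ ^ 2) x, u⟫
      = 2 * ⟪G x, fderiv ℝ G x (ι u)⟫ := by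
        rw [inner_partialGradient, hG.norm_sq.fderiv]
        simp
    _ = 2 * ⟪fderiv ℝ G x (ι (G x)), u⟫ := by
        rw [real_inner_comm, inner_fderiv_partialGradient hE, hsymm,
          ← inner_fderiv_partialGradient hE]
    _ = ⟪(2 : ℝ) • fderiv ℝ G x (ι (G x)), u⟫ := (real_inner_smul_left _ _ _).symm

theorem drift_correction (hE : ContDiff ℝ 2 E) {N : Type*} [NormedAddCommGroup N]
    [NormedSpace ℝ N] (ι' : N →L[ℝ] X) (x : X) (v : N) :
    (-(1 / 2 : ℝ)) • (fderiv ℝ (fun y => -partialGradient ι E y) x (ι (-partialGradient ι E x)) +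
        fderiv ℝ (fun y => -partialGradient ι E y) x (ι' (-v))) =
      (-(1 / 4 : ℝ)) • partialGradient ι (fun y => ‖partialGradient ι E y‖ ^ 2) x -
        (1 / 2 : ℝ) • fderiv ℝ (partialGradient ι E) x (ι' v) := by
  rw [fderiv_fun_neg, partialGradient_norm_sq hE]
  simp only [neg_apply, map_neg, neg_neg]
  module

end PartialGradient

theorem gradPhi_eq_partialGradient {m n : ℕ}
    {E : EuclideanSpace ℝ (Fin m) × EuclideanSpace ℝ (Fin n) → ℝ} (hE : Differentiable ℝ E) :
    gradPhi E = partialGradient (ContinuousLinearMap.inl ℝ _ _) E := by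
  funext z
  exact congrArg (InnerProductSpace.toDual ℝ _).symm
    ((hE z).hasFDerivAt.comp z.1 (hasFDerivAt_prodMk_left z.1 z.2)).fderiv

theorem gradTheta_eq_partialGradient {m n : ℕ}
    {E : EuclideanSpace ℝ (Fin m) × EuclideanSpace ℝ (Fin n) → ℝ} (hE : Differentiable ℝ E) :
    gradTheta E = partialGradient (ContinuousLinearMap.inr ℝ _ _) E := by
  funext z
  exact congrArg (InnerProductSpace.toDual ℝ _).symm
    ((hE z).hasFDerivAt.comp z.2 (hasFDerivAt_prodMk_right z.1 z.2)).fderiv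

/-- **Drift corrections in general two-player games.**
For gradient descent with `f = −∇_φ L₁` and `g = −∇_θ L₂`, the first-order drift corrections
of simultaneous gradient descent satisfy
`f₁ = −(1/4)∇_φ‖∇_φ L₁‖² − (1/2)(∇_θ L₂)·∇_θ(∇_φ L₁)` and
`g₁ = −(1/4)∇_θ‖∇_θ L₂‖² − (1/2)(∇_φ L₁)·∇_φ(∇_θ L₂)`. -/
theorem general_game_drift_corrections {m n : ℕ}
    (L₁ L₂ : EuclideanSpace ℝ (Fin m) × EuclideanSpace ℝ (Fin n) → ℝ)
    (hL₁ : ContDiff ℝ 2 L₁) (hL₂ : ContDiff ℝ 2 L₂)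
    (f : EuclideanSpace ℝ (Fin m) × EuclideanSpace ℝ (Fin n) → EuclideanSpace ℝ (Fin m))
    (g : EuclideanSpace ℝ (Fin m) × EuclideanSpace ℝ (Fin n) → EuclideanSpace ℝ (Fin n))
    (hfdef : f = fun z => -gradPhi L₁ z) (hgdef : g = fun z => -gradTheta L₂ z) :
    ∀ z : EuclideanSpace ℝ (Fin m) × EuclideanSpace ℝ (Fin n),
      (-(1 / 2 : ℝ)) • (fderiv ℝ f z (f z, 0) + fderiv ℝ f z (0, g z)) =
        (-(1 / 4 : ℝ)) • gradPhi (fun w => ‖gradPhi L₁ w‖ ^ 2) z -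
          (1 / 2 : ℝ) • fderiv ℝ (fun w => gradPhi L₁ w) z (0, gradTheta L₂ z) ∧
      (-(1 / 2 : ℝ)) • (fderiv ℝ g z (f z, 0) + fderiv ℝ g z (0, g z)) =
        (-(1 / 4 : ℝ)) • gradTheta (fun w => ‖gradTheta L₂ w‖ ^ 2) z -
          (1 / 2 : ℝ) • fderiv ℝ (fun w => gradTheta L₂ w) z (gradPhi L₁ z, 0) := by
  intro z
  subst hfdef hgdef
  have hG₁ := hL₁.partialGradient (ι := ContinuousLinearMap.inl ℝ _ _)
  have hG₂ := hL₂.partialGradient (ι := ContinuousLinearMap.inr ℝ _ _)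
  rw [gradPhi_eq_partialGradient (hL₁.differentiable two_ne_zero),
    gradTheta_eq_partialGradient (hL₂.differentiable two_ne_zero),
    gradPhi_eq_partialGradient ((hG₁.differentiable one_ne_zero).norm_sq ℝ),
    gradTheta_eq_partialGradient ((hG₂.differentiable one_ne_zero).norm_sq ℝ)]
  -- `inl a` and `inr b` unfold to `(a, 0)` and `(0, b)`.
  constructor
  · exact drift_correction hL₁ (ContinuousLinearMap.inr ℝ _ _) z _
  · rw [add_comm]
    exact drift_correction hL₂ (ContinuousLinearMap.inl ℝ _ _) z _

end
end
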